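/- There exists a set P of 32 points in ℝ⁵, no 6 of which lie on a common affine hyperplane, such that for any 5 affine hyperplanes in ℝ⁵ it is impossible that the 32 points of P lie in 32 pairwise distinct open cells of the hyperplane arrangement. That is, for any nonzero linear functionals f₁, ..., f₅ : ℝ⁵ → ℝ and reals c₁, ..., c₅, either some point p ∈ P satisfies fᵢ(p) = cᵢ for some i, or there exist two distinct points p, q ∈ P such that for every i ∈ {1,...,5} the numbers fᵢ(p) − cᵢ and fᵢ(q) − cᵢ have the same sign. -/

import Mathlib

/-!
Take the 32 points `(t, t², …, t⁵)`, `t = 0, 1, …, 31`, on the moment curve. Along the curve an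
affine hyperplane `f x = c` becomes a polynomial equation of degree at most 5, nonzero when
`f ≠ 0`. Hence a hyperplane meets the curve in at most 5 points, and it separates at most 5 of
the 31 pairs of consecutive points `t, t + 1` (each such pair encloses a root). Five hyperplanes
separate at most 25 < 31 consecutive pairs, so two consecutive points share a cell.
-/

open Polynomial Finset

def momentCurve (n : ℕ) (t : ℝ) : Fin n → ℝ := fun i => t ^ ((i : ℕ) + 1)

lemma momentCurve_injective {n : ℕ} [NeZero n] : Function.Injective (momentCurve n) :=
  fun s t h => by simpa [momentCurve] using congrFun h 0

section MomentPoly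

variable {n : ℕ}

noncomputable def momentPoly (f : (Fin n → ℝ) →ₗ[ℝ] ℝ) : ℝ[X] :=
  ∑ i : Fin n, monomial ((i : ℕ) + 1) (f fun j => if i = j then 1 else 0)

lemma eval_momentPoly (f : (Fin n → ℝ) →ₗ[ℝ] ℝ) (t : ℝ) :
    (momentPoly f).eval t = f (momentCurve n t) := by
  rw [LinearMap.pi_apply_eq_sum_univ f]
  simp [momentPoly, eval_finsetSum, momentCurve, mul_comm]

lemma coeff_momentPoly_succ (f : (Fin n → ℝ) →ₗ[ℝ] ℝ) (i : Fin n) :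
    (momentPoly f).coeff ((i : ℕ) + 1) = f fun j => if i = j then 1 else 0 := by
  simp [momentPoly, coeff_monomial, Fin.val_inj]

lemma natDegree_momentPoly_le (f : (Fin n → ℝ) →ₗ[ℝ] ℝ) : (momentPoly f).natDegree ≤ n :=
  natDegree_sum_le_of_forall_le _ _ fun i _ => (natDegree_monomial_le _).trans (by omega)

lemma momentPoly_sub_C_ne_zero {f : (Fin n → ℝ) →ₗ[ℝ] ℝ} (hf : f ≠ 0) (c : ℝ) :
    momentPoly f - C c ≠ 0 := by
  contrapose! hf
  have hbasis (i : Fin n) : (f fun j => if i = j then 1 else 0) = 0 := by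
    simpa [coeff_momentPoly_succ] using congrArg (coeff · ((i : ℕ) + 1)) hf
  exact LinearMap.ext fun x => by simp [LinearMap.pi_apply_eq_sum_univ f x, hbasis]

end MomentPoly

lemma card_roots_toFinset_le_natDegree (p : ℝ[X]) : p.roots.toFinset.card ≤ p.natDegree :=
  p.roots.toFinset_card_le.trans (card_roots' p)

lemma exists_mem_Ioo_eval_eq_zero {p : ℝ[X]} {a b : ℝ} (hab : a ≤ b)
    (h : p.eval a * p.eval b < 0) : ∃ r ∈ Set.Ioo a b, p.eval r = 0 := by
  have hcont := p.continuous.continuousOn (s := Set.Icc a b)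
  rcases mul_neg_iff.1 h with ⟨ha, hb⟩ | ⟨ha, hb⟩
  · exact intermediate_value_Ioo' hab hcont ⟨hb, ha⟩
  · exact intermediate_value_Ioo hab hcont ⟨ha, hb⟩

/-- Each sign change of `p` between consecutive naturals encloses a root, whose floor recovers
the place of the sign change. -/
lemma card_filter_sign_change_le (p : ℝ[X]) (s : Finset ℕ) :
    (s.filter fun k : ℕ => p.eval (k : ℝ) * p.eval ((k : ℝ) + 1) < 0).card ≤ p.natDegree := by
  rcases eq_or_ne p 0 with rfl | hp
  · simp
  calc _ ≤ (p.roots.toFinset.image Nat.floor).card := card_le_card fun k hk => by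
        obtain ⟨r, ⟨hkr, hrk⟩, hroot⟩ :=
          exists_mem_Ioo_eval_eq_zero (by linarith) (mem_filter.1 hk).2
        refine mem_image.2 ⟨r, by simp [mem_roots hp, hroot], ?_⟩
        exact (Nat.floor_eq_iff (k.cast_nonneg.trans hkr.le)).2 ⟨hkr.le, hrk⟩
    _ ≤ p.roots.toFinset.card := card_image_le
    _ ≤ p.natDegree := card_roots_toFinset_le_natDegree p

section Hyperplanes

variable {n : ℕ}

lemma card_filter_image_momentCurve_le {f : (Fin n → ℝ) →ₗ[ℝ] ℝ} (hf : f ≠ 0) (c : ℝ)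
    (s : Finset ℝ) : ((s.image (momentCurve n)).filter fun p => f p = c).card ≤ n := by
  have hp := momentPoly_sub_C_ne_zero hf c
  rw [filter_image]
  calc _ ≤ (s.filter fun t => f (momentCurve n t) = c).card := card_image_le
    _ ≤ (momentPoly f - C c).roots.toFinset.card := card_le_card fun t ht => by
        simp_all [mem_roots hp, eval_momentPoly, sub_eq_zero]
    _ ≤ n := (card_roots_toFinset_le_natDegree _).trans
        (natDegree_sub_C.trans_le (natDegree_momentPoly_le f))

lemma exists_consecutive_momentCurve_not_separated {m : ℕ}
    (f : Fin m → (Fin n → ℝ) →ₗ[ℝ] ℝ) (c : Fin m → ℝ) {N : ℕ} (hN : m * n < N) :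
    ∃ k < N, ∀ i,
      0 ≤ (f i (momentCurve n k) - c i) * (f i (momentCurve n ((k + 1 : ℕ) : ℝ)) - c i) := by
  by_contra! hsep
  let signChanges (i : Fin m) := (range N).filter fun k : ℕ =>
    (momentPoly (f i) - C (c i)).eval (k : ℝ) * (momentPoly (f i) - C (c i)).eval ((k : ℝ) + 1) < 0
  have hcover : range N ⊆ univ.biUnion signChanges := fun k hk => by
    obtain ⟨i, hi⟩ := hsep k (mem_range.1 hk)
    push_cast at hi
    simpa [signChanges, eval_momentPoly, hk] using ⟨i, hi⟩
  have : N ≤ m * n := calc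
    N = (range N).card := (card_range N).symm
    _ ≤ ∑ i, (signChanges i).card := (card_le_card hcover).trans card_biUnion_le
    _ ≤ ∑ _i : Fin m, n := sum_le_sum fun i _ => (card_filter_sign_change_le _ _).trans
        (natDegree_sub_C.trans_le (natDegree_momentPoly_le _))
    _ = m * n := by simp
  omega

end Hyperplanes

/-- There is a set of 32 points in ℝ⁵ in general position (no 6 on a common
affine hyperplane) that cannot be put into 32 pairwise distinct open cells by
any arrangement of 5 affine hyperplanes. -/
theorem exists_32_points_not_separable_by_five_hyperplanes :
    ∃ P : Finset (Fin 5 → ℝ), P.card = 32 ∧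
      (∀ f : (Fin 5 → ℝ) →ₗ[ℝ] ℝ, f ≠ 0 → ∀ c : ℝ,
        (P.filter (fun p => f p = c)).card ≤ 5) ∧
      (∀ f : Fin 5 → ((Fin 5 → ℝ) →ₗ[ℝ] ℝ), (∀ i, f i ≠ 0) →
        ∀ c : Fin 5 → ℝ,
          (∃ p ∈ P, ∃ i : Fin 5, f i p = c i) ∨
          (∃ p ∈ P, ∃ q ∈ P, p ≠ q ∧
            ∀ i : Fin 5,
              (0 < f i p - c i ∧ 0 < f i q - c i) ∨
              (f i p - c i < 0 ∧ f i q - c i < 0))) := by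
  let γ : ℕ → Fin 5 → ℝ := momentCurve 5 ∘ Nat.cast
  have hγ : Function.Injective γ := momentCurve_injective.comp Nat.cast_injective
  have hmem {k : ℕ} (hk : k < 32) : γ k ∈ (range 32).image γ := mem_image_of_mem γ (mem_range.2 hk)
  refine ⟨(range 32).image γ, by rw [card_image_of_injective _ hγ, card_range], ?_, ?_⟩
  · intro f hf c
    simpa only [image_image] using card_filter_image_momentCurve_le hf c ((range 32).image Nat.cast)
  · intro f _ c
    by_cases hon : ∃ p ∈ (range 32).image γ, ∃ i, f i p = c i
    · exact Or.inl hon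
    push Not at hon
    obtain ⟨k, hk, hsame⟩ := exists_consecutive_momentCurve_not_separated f c (N := 31) (by norm_num)
    refine Or.inr ⟨γ k, hmem (by omega), γ (k + 1), hmem (by omega), hγ.ne (by omega), fun i => ?_⟩
    have hoff {j : ℕ} (hj : j < 32) : f i (γ j) - c i ≠ 0 := sub_ne_zero.2 (hon _ (hmem hj) i)
    exact pos_and_pos_or_neg_and_neg_of_mul_pos
      ((hsame i).lt_of_ne (mul_ne_zero (hoff (by omega)) (hoff (by omega))).symm)
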